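/- arXiv:math/0004040 — 6 statements merged into one kernel-verified Lean document; each statement's English description precedes it below -/
import Mathlib

section
/- Let n ≥ 1 be an integer and set ε = exp(2πi/(n+1)) ∈ ℂ. Let G be the complex square matrix indexed by pairs ((l,m),(l',m')) with 0 ≤ l, m, l', m' ≤ n−1, whose entry at ((l,m),(l',m')) is ε^{l'(l+1) + m'(m+1)}, and let σ = ∏_{0 ≤ l < k ≤ n} (ε^k − ε^l)^2. Then det G = (n+1)^{−2n} · σ^n. -/
/-- Auxiliary: a double product over `i < j` in `Fin n` equals the corresponding
double product over natural number ranges. -/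
lemma aux_prod_Ioi_eq_prod_range (n : ℕ) (f : ℕ → ℕ → ℂ) :
    (∏ i : Fin n, ∏ j ∈ Finset.Ioi i, f i j)
      = ∏ k ∈ Finset.range n, ∏ l ∈ Finset.range k, f l k := by
  induction n generalizing f with
  | zero => simp
  | succ n ih =>
    rw [Fin.prod_univ_succ]
    simp only [Fin.prod_Ioi_zero, Fin.prod_Ioi_succ, Fin.val_succ, Fin.val_zero]
    rw [ih (fun a b => f (a + 1) (b + 1))]
    rw [Finset.prod_range_succ']
    simp only [Finset.range_zero, Finset.prod_empty, mul_one]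
    rw [Finset.prod_congr rfl (fun k _ => Finset.prod_range_succ' (fun l => f l (k + 1)) k),
      Finset.prod_mul_distrib, Fin.prod_univ_eq_prod_range (fun j => f 0 (j + 1))]
    ring

/-- Formula (24) of the paper: `det G = (n+1)^{−2n} · σ^n`, where `G` is the `n²×n²`
matrix of formula (22) and `σ = ∏_{0 ≤ l < k ≤ n} (ε^k − ε^l)^2`. -/
theorem det_G_eq_sigma_pow (n : ℕ) (hn : 1 ≤ n)
    (ε : ℂ) (hε : ε = Complex.exp (2 * Real.pi * Complex.I / (n + 1)))
    (G : Matrix (Fin n × Fin n) (Fin n × Fin n) ℂ)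
    (hG : ∀ p q : Fin n × Fin n,
      G p q = ε ^ ((q.1 : ℕ) * ((p.1 : ℕ) + 1) + (q.2 : ℕ) * ((p.2 : ℕ) + 1)))
    (σ : ℂ)
    (hσ : σ = ∏ k ∈ Finset.range (n + 1), ∏ l ∈ Finset.range k, (ε ^ k - ε ^ l) ^ 2) :
    G.det = ((n : ℂ) + 1) ^ (-(2 * (n : ℤ))) * σ ^ n := by
  -- ε is a primitive (n+1)-st root of unity
  have hprim : IsPrimitiveRoot ε (n + 1) := by
    rw [hε]
    have := Complex.isPrimitiveRoot_exp (n + 1) (Nat.succ_ne_zero n)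
    convert this using 3
    push_cast
    ring
  have hn1 : ((n : ℂ) + 1) ≠ 0 := by
    have : (((n + 1 : ℕ)) : ℂ) ≠ 0 := Nat.cast_ne_zero.mpr (Nat.succ_ne_zero n)
    push_cast at this
    exact this
  -- G is a Kronecker square of a Vandermonde matrix
  set v : Fin n → ℂ := fun i => ε ^ ((i : ℕ) + 1) with hv
  have hpow : ∀ a b : ℕ, ε ^ (b * (a + 1)) = (ε ^ (a + 1)) ^ b := by
    intro a b; rw [← pow_mul, mul_comm]
  have hGk : G = Matrix.kroneckerMap (· * ·) (Matrix.vandermonde v)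
      (Matrix.vandermonde v) := by
    ext p q
    rw [hG]
    simp only [Matrix.kroneckerMap_apply, Matrix.vandermonde_apply, hv]
    rw [pow_add, hpow, hpow]
  -- the Vandermonde determinant
  set W : ℂ := ∏ k ∈ Finset.range n, ∏ l ∈ Finset.range k,
      (ε ^ (k + 1) - ε ^ (l + 1)) with hW
  have hdetV : (Matrix.vandermonde v).det = W := by
    rw [Matrix.det_vandermonde, hW,
      ← aux_prod_Ioi_eq_prod_range n (fun a b => ε ^ (b + 1) - ε ^ (a + 1))]
  have hdetG : G.det = W ^ (2 * n) := by
    rw [hGk, Matrix.det_kronecker, hdetV, Fintype.card_fin, ← pow_add, two_mul]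
  -- the factor ∏ (ε^(k+1) - 1)
  set c : ℂ := ∏ k ∈ Finset.range n, (ε ^ (k + 1) - 1) with hc
  have hcsq : c ^ 2 = ((n : ℂ) + 1) ^ 2 := by
    have h := hprim.prod_pow_sub_one_eq_order
    have : ((-1 : ℂ) ^ n * c) ^ 2 = ((n : ℂ) + 1) ^ 2 := by rw [hc, h]
    rwa [mul_pow, ← pow_mul, mul_comm n 2, pow_mul, neg_one_sq, one_pow, one_mul] at this
  -- the full Vandermonde product over all n+1 roots
  set V : ℂ := ∏ k ∈ Finset.range (n + 1), ∏ l ∈ Finset.range k, (ε ^ k - ε ^ l) with hV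
  have hVW : V = W * c := by
    rw [hV, Finset.prod_range_succ']
    simp only [Finset.range_zero, Finset.prod_empty, mul_one]
    rw [Finset.prod_congr rfl
      (fun k _ => Finset.prod_range_succ' (fun l => ε ^ (k + 1) - ε ^ l) k)]
    simp only [pow_zero]
    rw [Finset.prod_mul_distrib, hW, hc]
  have hσV : σ = V ^ 2 := by
    rw [hσ, hV, ← Finset.prod_pow]
    exact Finset.prod_congr rfl fun k _ => Finset.prod_pow _ _ _
  -- put everything together
  have hz : ((n : ℂ) + 1) ^ (-(2 * (n : ℤ))) = (((n : ℂ) + 1) ^ (2 * n))⁻¹ := by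
    rw [zpow_neg]
    norm_cast
  rw [hdetG, hz, hσV, hVW, mul_pow, hcsq, ← mul_pow, ← pow_mul, mul_pow W ((n : ℂ) + 1) (2 * n)]
  field_simp
end

section
/- Let n ≥ 1 be an integer and set ε = exp(2πi/(n+1)) ∈ ℂ. For an integer s with 1 ≤ s ≤ n, let G_s be the complex square matrix indexed by pairs ((l,m),(l',m')) with 0 ≤ l, l' ≤ s−1 and 0 ≤ m, m' ≤ n−1, whose entry at ((l,m),(l',m')) is ε^{l'(l+1) + m'(m+1)}. Then for every integer s with 2 ≤ s ≤ n, det G_s = ( ∏_{l=1}^{s−1} (ε^s − ε^l) )^n · det G_1 · det G_{s−1}. -/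
open Finset

private lemma vand_nat (f : ℕ → ℂ) (t : ℕ) :
    (Matrix.vandermonde fun l : Fin (t + 1) => f l).det
      = ∏ i ∈ range (t + 1), ∏ j ∈ Finset.Ioc i t, (f j - f i) := by
  rw [Matrix.det_vandermonde]
  have h1 : ∀ i : Fin (t + 1),
      (∏ j ∈ Finset.Ioi i, (f j - f i)) = ∏ j ∈ Finset.Ioc (i : ℕ) t, (f j - f i) := by
    intro i
    have h2 : Finset.Ioi i = Finset.Ioc i (Fin.last t) := by
      ext j; simp [Fin.le_last]
    have h3 : Finset.Ioc (i : ℕ) t = (Finset.Ioc i (Fin.last t)).map Fin.valEmbedding :=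
      (Fin.map_valEmbedding_Ioc i (Fin.last t)).symm
    rw [h2, h3, Finset.prod_map]
    simp
  calc (∏ i : Fin (t + 1), ∏ j ∈ Finset.Ioi i, (f j - f i))
      = ∏ i : Fin (t + 1), ∏ j ∈ Finset.Ioc (i : ℕ) t, (f j - f i) := by
        exact Finset.prod_congr rfl fun i _ => h1 i
    _ = _ := Fin.prod_univ_eq_prod_range (fun i => ∏ j ∈ Finset.Ioc i t, (f j - f i)) (t + 1)

private lemma vand_step (f : ℕ → ℂ) (u : ℕ) :
    (Matrix.vandermonde fun l : Fin (u + 2) => f l).det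
      = (∏ i ∈ range (u + 1), (f (u + 1) - f i)) *
        (Matrix.vandermonde fun l : Fin (u + 1) => f l).det := by
  rw [vand_nat, vand_nat, Finset.prod_range_succ]
  have h0 : Finset.Ioc (u + 1) (u + 1) = ∅ := by simp
  rw [h0, Finset.prod_empty, mul_one]
  have h1 : ∀ i ∈ range (u + 1),
      (∏ j ∈ Finset.Ioc i (u + 1), (f j - f i))
        = (f (u + 1) - f i) * ∏ j ∈ Finset.Ioc i u, (f j - f i) := by
    intro i hi
    have hi' : i ≤ u := by simpa using Nat.lt_succ_iff.mp (Finset.mem_range.mp hi)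
    have : Finset.Ioc i (u + 1) = insert (u + 1) (Finset.Ioc i u) := by
      ext j; simp [Finset.mem_Ioc]; omega
    rw [this, Finset.prod_insert (by simp)]
  rw [Finset.prod_congr rfl h1, Finset.prod_mul_distrib]

/-- The recurrence formula (27) of the paper: for the `ns×ns` upper-left blocks `G_s`
(indexed by pairs `((l,m),(l',m'))` with `0 ≤ l,l' ≤ s−1`, `0 ≤ m,m' ≤ n−1`, entries
`ε^{l'(l+1)+m'(m+1)}`) of the matrix `G` of formula (22), one has for `2 ≤ s ≤ n`:
`det G_s = (∏_{l=1}^{s−1} (ε^s − ε^l))^n · det G_1 · det G_{s−1}`. -/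
theorem det_G_block_recurrence (n : ℕ) (hn : 1 ≤ n)
    (ε : ℂ) (hε : ε = Complex.exp (2 * Real.pi * Complex.I / (n + 1)))
    (G : (s : ℕ) → Matrix (Fin s × Fin n) (Fin s × Fin n) ℂ)
    (hG : ∀ (s : ℕ) (p q : Fin s × Fin n),
      G s p q = ε ^ ((q.1 : ℕ) * ((p.1 : ℕ) + 1) + (q.2 : ℕ) * ((p.2 : ℕ) + 1)))
    (s : ℕ) (hs2 : 2 ≤ s) (hsn : s ≤ n) :
    (G s).det =
      (∏ l ∈ Finset.Icc 1 (s - 1), (ε ^ s - ε ^ l)) ^ n * (G 1).det * (G (s - 1)).det := by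
  obtain ⟨u, rfl⟩ : ∃ u, s = u + 2 := ⟨s - 2, by omega⟩
  set Bm : Matrix (Fin n) (Fin n) ℂ := fun m m' => ε ^ ((m' : ℕ) * ((m : ℕ) + 1)) with hBm
  set f : ℕ → ℂ := fun k => ε ^ (k + 1) with hf
  have hGk : ∀ t, G t = Matrix.kroneckerMap (· * ·)
      (Matrix.vandermonde fun l : Fin t => f l) Bm := by
    intro t
    ext p q
    rw [hG, Matrix.kroneckerMap_apply, Matrix.vandermonde]
    simp only [Matrix.of_apply, hf, hBm]
    rw [pow_add, ← pow_mul, Nat.mul_comm]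
  have hdet : ∀ t, (G t).det
      = (Matrix.vandermonde fun l : Fin t => f l).det ^ n * Bm.det ^ t := by
    intro t
    rw [hGk t]
    have := Matrix.det_kronecker (Matrix.vandermonde fun l : Fin t => f l) Bm
    simpa [Matrix.kronecker] using this
  have hV1 : (Matrix.vandermonde fun l : Fin 1 => f l).det = 1 := by
    rw [Matrix.det_fin_one]
    simp [Matrix.vandermonde]
  have hG1 : (G 1).det = Bm.det := by
    rw [hdet 1, hV1, one_pow, pow_one, one_mul]
  have hsub : u + 2 - 1 = u + 1 := rfl
  have hprod : (∏ l ∈ Finset.Icc 1 (u + 1), (ε ^ (u + 2) - ε ^ l))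
      = ∏ i ∈ range (u + 1), (f (u + 1) - f i) := by
    rw [← Finset.Ico_add_one_right_eq_Icc, Finset.prod_Ico_eq_prod_range]
    simp only [hf]
    apply Finset.prod_congr (by norm_num)
    intro i _
    rw [Nat.add_comm 1 i]
  rw [hdet (u + 2), hsub, hdet (u + 1), hG1, hprod,
    vand_step f u, mul_pow]
  ring
end

section
/- Let n ≥ 2 and k be integers with 1 ≤ k ≤ n−1, and let H(x,y) = ∑_{s=0}^{n+1} h_s x^{n+1−s} y^s ∈ ℂ[x,y] be a homogeneous polynomial of degree n+1 that is not divisible by the square of any non-zero linear form. Let E_{n,k} be the 2k×2k complex matrix built from the coefficients h_s as described in the context. Then det E_{n,k} = 0 if and only if there exists a family of complex numbers (c_{l,m}), indexed by pairs of integers (l,m) with 0 ≤ l,m ≤ n−1 and l+m = n+k−1, not all zero, such that ∑ c_{l,m} x^l y^m belongs to the ideal of ℂ[x,y] generated by ∂H/∂x and ∂H/∂y. -/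
/-!
Dehomogenizing at `x = 1` identifies binary forms of degree `d` with polynomials of degree `≤ d`
in `y`, and taking homogeneous components shows that a form of degree `n + k - 1` lies in
`(H_x, H_y)` iff it equals `u H_x + w H_y` with `u, w` forms of degree `k - 1`. With `a, b` the
dehomogenized partials, the rows of `E_{n,k}` hold the coefficients of `y^i a` and `y^i b`
(`i < k`) at `y^j` and `y^{n+j}` (`j < k`). Hence `det E_{n,k} = 0` iff some `P a + Q b` with
`(P, Q) ≠ 0` and `deg P, deg Q < k` only involves `y^k, …, y^{n-1}`, i.e. comes from a form in the
window of the statement. Such a combination is never zero: by Euler's identity a common root of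
`a` and `b` is a double root of `H(1, y)`, and if both had degree `< n` then `x^2 ∣ H`; so `a, b`
are coprime and one of them has degree `n > deg P, deg Q`.
-/

open MvPolynomial Finset Matrix
open scoped Polynomial

namespace Polynomial

section CommRing

variable {R : Type*} [CommRing R]

noncomputable def shiftedCoeffMatrix (p : R[X]) (k m : ℕ) : Matrix (Fin k) (Fin k) R :=
  Matrix.of fun i j => (X ^ (i : ℕ) * p).coeff (m + j)

theorem vecMul_shiftedCoeffMatrix [DecidableEq R] (p : R[X]) (k m : ℕ) (v : Fin k → R)
    (j : Fin k) : (v ᵥ* shiftedCoeffMatrix p k m) j = (ofFn k v * p).coeff (m + j) := by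
  simp [shiftedCoeffMatrix, vecMul, dotProduct, ofFn_eq_sum_monomial, sum_mul, finsetSum_coeff,
    ← C_mul_X_pow_eq_monomial, mul_assoc]

theorem vecMul_fromBlocks_shiftedCoeffMatrix_eq_zero_iff [DecidableEq R] (a b : R[X]) (n k : ℕ)
    (v : Fin k ⊕ Fin k → R) :
    v ᵥ* fromBlocks (shiftedCoeffMatrix a k 0) (shiftedCoeffMatrix a k n)
        (shiftedCoeffMatrix b k 0) (shiftedCoeffMatrix b k n) = 0 ↔
      ∀ j < k, (ofFn k (v ∘ .inl) * a + ofFn k (v ∘ .inr) * b).coeff j = 0 ∧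
        (ofFn k (v ∘ .inl) * a + ofFn k (v ∘ .inr) * b).coeff (n + j) = 0 := by
  simp only [vecMul_fromBlocks, funext_iff, Sum.forall, Sum.elim_inl, Sum.elim_inr, Pi.add_apply,
    vecMul_shiftedCoeffMatrix, Pi.zero_apply, zero_add, ← coeff_add]
  exact ⟨fun h j hj => ⟨h.1 ⟨j, hj⟩, h.2 ⟨j, hj⟩⟩,
    fun h => ⟨fun j => (h j j.2).1, fun j => (h j j.2).2⟩⟩

theorem forall_coeff_eq_zero_of_notMem_Ico_iff {F : R[X]} {n k : ℕ} (hF : F.natDegree < n + k) :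
    (∀ m ∉ Ico k n, F.coeff m = 0) ↔ ∀ j < k, F.coeff j = 0 ∧ F.coeff (n + j) = 0 := by
  refine ⟨fun h j hj => ⟨h j (by simp; omega), h (n + j) (by simp)⟩, fun h m hm => ?_⟩
  rw [mem_Ico, not_and_or, not_le, not_lt] at hm
  rcases hm with hm | hm
  · exact (h m hm).1
  by_cases hmk : m < n + k
  · simpa [show n + (m - n) = m by omega] using (h (m - n) (by omega)).2
  · exact coeff_eq_zero_of_natDegree_lt (by omega)

theorem natDegree_mul_add_mul_lt {P Q a b : R[X]} {n k : ℕ} (hP : P.natDegree < k)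
    (hQ : Q.natDegree < k) (ha : a.natDegree ≤ n) (hb : b.natDegree ≤ n) :
    (P * a + Q * b).natDegree < n + k :=
  (natDegree_add_le _ _).trans_lt <| max_lt (natDegree_mul_le.trans_lt (by omega))
    (natDegree_mul_le.trans_lt (by omega))

theorem coeff_sum_C_mul_X_pow (s : Finset ℕ) (c : ℕ → R) (m : ℕ) :
    (∑ i ∈ s, C (c i) * X ^ i).coeff m = if m ∈ s then c m else 0 := by
  simp [finsetSum_coeff]

theorem _root_.IsCoprime.eq_zero_of_mul_add_mul_eq_zero [IsDomain R] {a b P Q : R[X]}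
    (hab : IsCoprime a b) (h : P * a + Q * b = 0) (hQ : Q.natDegree < a.natDegree) :
    P = 0 ∧ Q = 0 := by
  have hQ0 : Q = 0 := by
    by_contra hQ0
    have haQ : a ∣ Q := hab.dvd_of_dvd_mul_right ⟨-P, by linear_combination h⟩
    exact (natDegree_le_of_dvd haQ hQ0).not_gt hQ
  have ha0 : a ≠ 0 := by rintro rfl; simp at hQ
  subst hQ0
  exact ⟨by simpa [ha0] using h, rfl⟩

end CommRing

variable {K : Type*} [Field K] {a b : K[X]} {n k : ℕ}

theorem det_fromBlocks_shiftedCoeffMatrix_eq_zero_iff (hk : 1 ≤ k) (ha : a.natDegree ≤ n)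
    (hb : b.natDegree ≤ n) :
    (fromBlocks (shiftedCoeffMatrix a k 0) (shiftedCoeffMatrix a k n)
        (shiftedCoeffMatrix b k 0) (shiftedCoeffMatrix b k n)).det = 0 ↔
      ∃ P Q : K[X], P.natDegree < k ∧ Q.natDegree < k ∧ (P ≠ 0 ∨ Q ≠ 0) ∧
        ∀ m ∉ Ico k n, (P * a + Q * b).coeff m = 0 := by
  classical
  rw [← exists_vecMul_eq_zero_iff]
  constructor
  · rintro ⟨v, hv0, hv⟩
    have hP := ofFn_natDegree_lt hk (v ∘ .inl)
    have hQ := ofFn_natDegree_lt hk (v ∘ .inr)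
    refine ⟨_, _, hP, hQ, ?_, (forall_coeff_eq_zero_of_notMem_Ico_iff
      (natDegree_mul_add_mul_lt hP hQ ha hb)).2
      ((vecMul_fromBlocks_shiftedCoeffMatrix_eq_zero_iff a b n k v).1 hv)⟩
    contrapose! hv0
    simp only [map_eq_zero_iff _ (injective_ofFn k)] at hv0
    rw [← Sum.elim_comp_inl_inr v, hv0.1, hv0.2, Sum.elim_zero_zero]
  · rintro ⟨P, Q, hP, hQ, hPQ, hF⟩
    refine ⟨Sum.elim (toFn k P) (toFn k Q), fun hv => ?_, ?_⟩
    · rw [← ofFn_comp_toFn_eq_id_of_natDegree_lt hP, ← ofFn_comp_toFn_eq_id_of_natDegree_lt hQ,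
        show toFn k P = 0 from _root_.funext fun i => congrFun hv (.inl i),
        show toFn k Q = 0 from _root_.funext fun i => congrFun hv (.inr i), map_zero] at hPQ
      simp at hPQ
    · rw [vecMul_fromBlocks_shiftedCoeffMatrix_eq_zero_iff, Sum.elim_comp_inl, Sum.elim_comp_inr,
        ofFn_comp_toFn_eq_id_of_natDegree_lt hP, ofFn_comp_toFn_eq_id_of_natDegree_lt hQ]
      exact (forall_coeff_eq_zero_of_notMem_Ico_iff (natDegree_mul_add_mul_lt hP hQ ha hb)).1 hF

theorem mul_add_mul_eq_zero_iff (hab : IsCoprime a b) (hdeg : n ≤ a.natDegree ∨ n ≤ b.natDegree)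
    {P Q : K[X]} (hP : P.natDegree < n) (hQ : Q.natDegree < n) :
    P * a + Q * b = 0 ↔ P = 0 ∧ Q = 0 := by
  refine ⟨fun h0 => ?_, fun h => by simp [h.1, h.2]⟩
  rcases hdeg with ha | hb
  · exact hab.eq_zero_of_mul_add_mul_eq_zero h0 (by omega)
  · exact (hab.symm.eq_zero_of_mul_add_mul_eq_zero (P := Q) (Q := P) (by linear_combination h0)
      (by omega)).symm

theorem exists_mul_add_mul_supported_iff (hab : IsCoprime a b)
    (hdeg : n ≤ a.natDegree ∨ n ≤ b.natDegree) (hk : k ≤ n) :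
    (∃ P Q : K[X], P.natDegree < k ∧ Q.natDegree < k ∧ (P ≠ 0 ∨ Q ≠ 0) ∧
        ∀ m ∉ Ico k n, (P * a + Q * b).coeff m = 0) ↔
      ∃ c : ℕ → K, (∃ m ∈ Ico k n, c m ≠ 0) ∧ ∃ P Q : K[X], P.natDegree < k ∧ Q.natDegree < k ∧
        P * a + Q * b = ∑ m ∈ Ico k n, C (c m) * X ^ m := by
  constructor
  · rintro ⟨P, Q, hP, hQ, hPQ, hF⟩
    obtain ⟨m, hm⟩ : ∃ m, (P * a + Q * b).coeff m ≠ 0 := by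
      by_contra! h0
      exact not_and_or.2 hPQ ((mul_add_mul_eq_zero_iff hab hdeg (by omega) (by omega)).1 (ext h0))
    refine ⟨(P * a + Q * b).coeff, ⟨m, by_contra fun hm' => hm (hF m hm'), hm⟩, P, Q, hP, hQ, ?_⟩
    ext t
    rw [coeff_sum_C_mul_X_pow]
    split_ifs with ht
    · rfl
    · exact hF t ht
  · rintro ⟨c, ⟨m, hm, hcm⟩, P, Q, hP, hQ, hF⟩
    refine ⟨P, Q, hP, hQ, not_and_or.1 fun h0 => hcm ?_,
      fun t ht => by rw [hF, coeff_sum_C_mul_X_pow, if_neg ht]⟩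
    have := coeff_sum_C_mul_X_pow (Ico k n) c m
    rwa [if_pos hm, ← hF, (mul_add_mul_eq_zero_iff hab hdeg (by omega) (by omega)).2 h0,
      coeff_zero, eq_comm] at this

end Polynomial

namespace MvPolynomial

section Homogeneous

variable {σ R : Type*} [CommSemiring R]

theorem homogeneousComponent_mul_of_isHomogeneous {a b : MvPolynomial σ R} {i j : ℕ}
    (hb : b.IsHomogeneous j) :
    homogeneousComponent (i + j) (a * b) = homogeneousComponent i a * b := by
  let _ := MvPolynomial.gradedAlgebra (σ := σ) (R := R)
  rw [← decomposition.decompose'_apply, ← decomposition.decompose'_apply]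
  exact DirectSum.coe_decompose_mul_add_of_right_mem (homogeneousSubmodule σ R)
    ((mem_homogeneousSubmodule j b).2 hb)

theorem IsHomogeneous.exists_of_mem_span_pair {g₁ g₂ p : MvPolynomial σ R} {d e : ℕ}
    (hp : p.IsHomogeneous (e + d)) (h₁ : g₁.IsHomogeneous d) (h₂ : g₂.IsHomogeneous d)
    (hmem : p ∈ Ideal.span {g₁, g₂}) :
    ∃ u w : MvPolynomial σ R, u.IsHomogeneous e ∧ w.IsHomogeneous e ∧ u * g₁ + w * g₂ = p := by
  obtain ⟨u, w, huw⟩ := Ideal.mem_span_pair.1 hmem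
  refine ⟨homogeneousComponent e u, homogeneousComponent e w,
    homogeneousComponent_isHomogeneous _ _, homogeneousComponent_isHomogeneous _ _, ?_⟩
  rw [← homogeneousComponent_mul_of_isHomogeneous h₁,
    ← homogeneousComponent_mul_of_isHomogeneous h₂, ← map_add, huw, homogeneousComponent_eq_self hp]

theorem isHomogeneous_sum_C_mul_X_pow_mul_X_pow (s : Finset ℕ) (c : ℕ → R) {d : ℕ}
    (hs : ∀ m ∈ s, m ≤ d) :
    (∑ m ∈ s, C (c m) * X 0 ^ (d - m) * X 1 ^ m : MvPolynomial (Fin 2) R).IsHomogeneous d := by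
  refine IsHomogeneous.sum _ _ _ fun m hm => ?_
  simpa [Nat.sub_add_cancel (hs m hm)] using
    ((isHomogeneous_C _ (c m)).mul (isHomogeneous_X_pow (0 : Fin 2) (d - m))).mul
      (isHomogeneous_X_pow (1 : Fin 2) m)

end Homogeneous

section Dehomogenize

variable {R : Type*} [CommRing R]

/-- Dehomogenization at `X 0 = 1`, with `X 1` becoming the variable; `Polynomial.homogenize` uses
the opposite convention, so the two are related through `rename (Equiv.swap 0 1)`. -/
noncomputable def dehomogenize : MvPolynomial (Fin 2) R →ₐ[R] R[X] :=
  aeval ![1, Polynomial.X]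

@[simp]
theorem dehomogenize_X_zero : dehomogenize (X 0 : MvPolynomial (Fin 2) R) = 1 := by
  simp [dehomogenize]

@[simp]
theorem dehomogenize_X_one : dehomogenize (X 1 : MvPolynomial (Fin 2) R) = Polynomial.X := by
  simp [dehomogenize]

theorem aeval_X_one_rename_swap (p : MvPolynomial (Fin 2) R) :
    aeval ![Polynomial.X, 1] (rename (Equiv.swap 0 1) p) = dehomogenize p := by
  rw [dehomogenize, aeval_rename, show (![Polynomial.X, 1] ∘ Equiv.swap (0 : Fin 2) 1 : Fin 2 → R[X])
    = ![1, Polynomial.X] from _root_.funext fun i => by fin_cases i <;> rfl]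

theorem dehomogenize_rename_swap (p : MvPolynomial (Fin 2) R) :
    dehomogenize (rename (Equiv.swap 0 1) p) = aeval ![Polynomial.X, 1] p := by
  rw [dehomogenize, aeval_rename, show (![1, Polynomial.X] ∘ Equiv.swap (0 : Fin 2) 1 : Fin 2 → R[X])
    = ![Polynomial.X, 1] from _root_.funext fun i => by fin_cases i <;> rfl]

theorem IsHomogeneous.eq_of_dehomogenize_eq {p q : MvPolynomial (Fin 2) R} {d : ℕ}
    (hp : p.IsHomogeneous d) (hq : q.IsHomogeneous d) (h : dehomogenize p = dehomogenize q) :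
    p = q := by
  apply rename_injective _ (Equiv.swap (0 : Fin 2) 1).injective
  rw [← Polynomial.homogenize_eq_of_isHomogeneous hp.rename_isHomogeneous
      (aeval_X_one_rename_swap p),
    ← Polynomial.homogenize_eq_of_isHomogeneous hq.rename_isHomogeneous
      (aeval_X_one_rename_swap q), h]

theorem exists_isHomogeneous_dehomogenize_eq {P : R[X]} {d : ℕ} (hP : P.natDegree ≤ d) :
    ∃ p : MvPolynomial (Fin 2) R, p.IsHomogeneous d ∧ dehomogenize p = P :=
  ⟨_, (Polynomial.isHomogeneous_homogenize P).rename_isHomogeneous,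
    by rw [dehomogenize_rename_swap, Polynomial.aeval_homogenize_X_one P hP]⟩

theorem IsHomogeneous.natDegree_dehomogenize_le {p : MvPolynomial (Fin 2) R} {d : ℕ}
    (hp : p.IsHomogeneous d) : (dehomogenize p).natDegree ≤ d := by
  rw [p.as_sum, map_sum]
  refine Polynomial.natDegree_sum_le_of_forall_le _ _ fun μ hμ => ?_
  have hμd : μ 1 ≤ d := (Finsupp.le_degree 1 μ).trans_eq
    (Finsupp.degree_eq_weight_one (R := ℕ) ▸ hp (mem_support_iff.1 hμ))
  simpa [dehomogenize, aeval_monomial, Finsupp.prod_fintype] using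
    (Polynomial.natDegree_C_mul_X_pow_le _ _).trans hμd

theorem IsHomogeneous.dvd_of_dehomogenize_eq_mul {p l : MvPolynomial (Fin 2) R} {d e : ℕ}
    {g : R[X]} (hp : p.IsHomogeneous (e + d)) (hl : l.IsHomogeneous e) (hg : g.natDegree ≤ d)
    (h : dehomogenize p = dehomogenize l * g) : l ∣ p := by
  obtain ⟨q, hq, rfl⟩ := exists_isHomogeneous_dehomogenize_eq hg
  exact ⟨q, hp.eq_of_dehomogenize_eq (hl.mul hq) (by rw [h, map_mul])⟩

theorem mem_span_pair_iff_exists_dehomogenize {g₁ g₂ p : MvPolynomial (Fin 2) R} {d e : ℕ}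
    (h₁ : g₁.IsHomogeneous d) (h₂ : g₂.IsHomogeneous d) (hp : p.IsHomogeneous (e + d)) :
    p ∈ Ideal.span {g₁, g₂} ↔ ∃ P Q : R[X], P.natDegree ≤ e ∧ Q.natDegree ≤ e ∧
      P * dehomogenize g₁ + Q * dehomogenize g₂ = dehomogenize p := by
  constructor
  · intro hmem
    obtain ⟨u, w, hu, hw, rfl⟩ := hp.exists_of_mem_span_pair h₁ h₂ hmem
    exact ⟨dehomogenize u, dehomogenize w, hu.natDegree_dehomogenize_le,
      hw.natDegree_dehomogenize_le, by rw [map_add, map_mul, map_mul]⟩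
  · rintro ⟨P, Q, hP, hQ, hPQ⟩
    obtain ⟨u, hu, rfl⟩ := exists_isHomogeneous_dehomogenize_eq hP
    obtain ⟨w, hw, rfl⟩ := exists_isHomogeneous_dehomogenize_eq hQ
    exact Ideal.mem_span_pair.2 ⟨u, w, ((hu.mul h₁).add (hw.mul h₂)).eq_of_dehomogenize_eq hp
      (by simpa using hPQ)⟩

theorem sum_Ico_mem_span_pair_iff {g₁ g₂ : MvPolynomial (Fin 2) R} {n k : ℕ} (hk : 1 ≤ k)
    (h₁ : g₁.IsHomogeneous n) (h₂ : g₂.IsHomogeneous n) (c : ℕ → R) :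
    (∑ m ∈ Ico k n, C (c m) * X 0 ^ (n + k - 1 - m) * X 1 ^ m) ∈ Ideal.span {g₁, g₂} ↔
      ∃ P Q : R[X], P.natDegree < k ∧ Q.natDegree < k ∧
        P * dehomogenize g₁ + Q * dehomogenize g₂ =
          ∑ m ∈ Ico k n, Polynomial.C (c m) * Polynomial.X ^ m := by
  have hT := isHomogeneous_sum_C_mul_X_pow_mul_X_pow (Ico k n) c (d := n + k - 1)
    fun m hm => by simp at hm; omega
  rw [mem_span_pair_iff_exists_dehomogenize (e := k - 1) h₁ h₂ (by convert hT using 1; omega)]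
  simp [Nat.le_sub_one_iff_lt hk]

theorem dehomogenize_pderiv_one (p : MvPolynomial (Fin 2) R) :
    dehomogenize (pderiv 1 p) = Polynomial.derivative (dehomogenize p) := by
  induction p using MvPolynomial.induction_on with
  | C a => simp
  | add p q hp hq => simp [hp, hq]
  | mul_X p i hp =>
    fin_cases i
    · simp [hp]
    · simp [hp, pderiv_X]
      ring

theorem IsHomogeneous.dehomogenize_pderiv_zero {p : MvPolynomial (Fin 2) R} {d : ℕ}
    (hp : p.IsHomogeneous d) :
    dehomogenize (pderiv 0 p) =
      d • dehomogenize p - Polynomial.X * Polynomial.derivative (dehomogenize p) := by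
  have := congrArg dehomogenize hp.sum_X_mul_pderiv
  simp only [Fin.sum_univ_two, map_add, map_mul, map_nsmul, dehomogenize_X_zero,
    dehomogenize_X_one, dehomogenize_pderiv_one, one_mul] at this
  rw [← this, add_sub_cancel_right]

theorem coeff_dehomogenize_pderiv_one (p : MvPolynomial (Fin 2) R) (t : ℕ) :
    (dehomogenize (pderiv 1 p)).coeff t = ((t + 1 : ℕ) : R) * (dehomogenize p).coeff (t + 1) := by
  rw [dehomogenize_pderiv_one, Polynomial.coeff_derivative, mul_comm]
  push_cast
  ring

theorem IsHomogeneous.coeff_dehomogenize_pderiv_zero {p : MvPolynomial (Fin 2) R} {d : ℕ}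
    (hp : p.IsHomogeneous d) (t : ℕ) :
    (dehomogenize (pderiv 0 p)).coeff t = ((d - t : ℕ) : R) * (dehomogenize p).coeff t := by
  rcases lt_or_ge d t with hdt | htd
  · rw [Polynomial.coeff_eq_zero_of_natDegree_lt (hp.natDegree_dehomogenize_le.trans_lt hdt),
      mul_zero]
    exact Polynomial.coeff_eq_zero_of_natDegree_lt
      ((hp.pderiv (i := 0)).natDegree_dehomogenize_le.trans_lt (by omega))
  rw [hp.dehomogenize_pderiv_zero, Polynomial.coeff_sub, Polynomial.coeff_smul, nsmul_eq_mul,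
    Nat.cast_sub htd]
  cases t with
  | zero => simp
  | succ t => rw [Polynomial.coeff_X_mul, Polynomial.coeff_derivative]; push_cast; ring

theorem IsHomogeneous.sq_dvd_of_dehomogenize_eq {H L : MvPolynomial (Fin 2) R} {n : ℕ} {g : R[X]}
    (hH : H.IsHomogeneous (n + 1)) (hL : L.IsHomogeneous 1) (hn : 1 ≤ n)
    (hg : g.natDegree ≤ n - 1) (h : dehomogenize H = dehomogenize L ^ 2 * g) : L ^ 2 ∣ H :=
  ((show n + 1 = 1 * 2 + (n - 1) by omega) ▸ hH).dvd_of_dehomogenize_eq_mul (hL.pow 2) hg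
    (by rw [h, map_pow])

theorem IsHomogeneous.le_natDegree_dehomogenize [Nontrivial R] {H : MvPolynomial (Fin 2) R}
    {n : ℕ} (hH : H.IsHomogeneous (n + 1))
    (hsq : ∀ L : MvPolynomial (Fin 2) R, L.IsHomogeneous 1 → L ≠ 0 → ¬ L ^ 2 ∣ H) :
    n ≤ (dehomogenize H).natDegree := by
  by_contra! h
  exact hsq (X 0) (isHomogeneous_X R 0) (X_ne_zero 0)
    (hH.sq_dvd_of_dehomogenize_eq (g := dehomogenize H) (isHomogeneous_X R 0) (by omega)
      (by omega) (by simp))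

end Dehomogenize

section BinaryForm

variable {K : Type*} [Field K] [CharZero K] {H : MvPolynomial (Fin 2) K} {n : ℕ}

theorem IsHomogeneous.isCoprime_dehomogenize_pderiv [IsAlgClosed K]
    (hH : H.IsHomogeneous (n + 1)) (hn : 1 ≤ n)
    (hsq : ∀ L : MvPolynomial (Fin 2) K, L.IsHomogeneous 1 → L ≠ 0 → ¬ L ^ 2 ∣ H) :
    IsCoprime (dehomogenize (pderiv 0 H)) (dehomogenize (pderiv 1 H)) := by
  rw [Polynomial.isCoprime_iff_aeval_ne_zero_of_isAlgClosed K K]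
  intro α
  by_contra! hα
  set f := dehomogenize H
  simp only [Polynomial.coe_aeval_eq_eval, hH.dehomogenize_pderiv_zero, dehomogenize_pderiv_one,
    Polynomial.eval_sub, Polynomial.eval_smul, Polynomial.eval_mul, Polynomial.eval_X] at hα
  have hf' : f.derivative.IsRoot α := hα.2
  have hf : f.IsRoot α := by
    have := hα.1
    rw [hα.2, mul_zero, sub_zero, nsmul_eq_mul, mul_eq_zero] at this
    exact this.resolve_left (by exact_mod_cast Nat.succ_ne_zero n)
  obtain ⟨g, hg⟩ : (Polynomial.X - Polynomial.C α) ^ 2 ∣ f := by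
    rcases eq_or_ne f 0 with h0 | h0
    · simp [h0]
    · exact (Polynomial.le_rootMultiplicity_iff h0).1
        ((Polynomial.one_lt_rootMultiplicity_iff_isRoot h0).2 ⟨hf, hf'⟩)
  have hgdeg : g.natDegree ≤ n - 1 := by
    rcases eq_or_ne g 0 with rfl | hg0
    · simp
    have : f.natDegree ≤ n + 1 := hH.natDegree_dehomogenize_le
    rw [hg, Polynomial.natDegree_mul (pow_ne_zero 2 (Polynomial.X_sub_C_ne_zero α)) hg0,
      Polynomial.natDegree_pow, Polynomial.natDegree_X_sub_C] at this
    omega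
  have hL : (X 1 - C α * X 0 : MvPolynomial (Fin 2) K).IsHomogeneous 1 :=
    (isHomogeneous_X K 1).sub (isHomogeneous_C_mul_X α 0)
  have hLψ : dehomogenize (X 1 - C α * X 0 : MvPolynomial (Fin 2) K) =
      Polynomial.X - Polynomial.C α := by
    simp
  refine hsq _ hL (fun h0 => Polynomial.X_sub_C_ne_zero α ?_)
    (hH.sq_dvd_of_dehomogenize_eq hL hn hgdeg (by rw [hLψ]; exact hg))
  rw [← hLψ, h0, map_zero]

theorem IsHomogeneous.le_natDegree_dehomogenize_pderiv (hH : H.IsHomogeneous (n + 1))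
    (hn : 1 ≤ n) (hsq : ∀ L : MvPolynomial (Fin 2) K, L.IsHomogeneous 1 → L ≠ 0 → ¬ L ^ 2 ∣ H) :
    n ≤ (dehomogenize (pderiv 0 H)).natDegree ∨ n ≤ (dehomogenize (pderiv 1 H)).natDegree := by
  have hlo := hH.le_natDegree_dehomogenize hsq
  have hhi := hH.natDegree_dehomogenize_le
  have hf0 : dehomogenize H ≠ 0 := fun h0 => by rw [h0, Polynomial.natDegree_zero] at hlo; omega
  rcases (show (dehomogenize H).natDegree = n ∨ (dehomogenize H).natDegree = n + 1 by omega)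
    with hd | hd
  · refine .inl (Polynomial.le_natDegree_of_ne_zero ?_)
    rw [hH.coeff_dehomogenize_pderiv_zero, Nat.add_sub_cancel_left, Nat.cast_one, one_mul, ← hd]
    exact Polynomial.leadingCoeff_ne_zero.2 hf0
  · refine .inr (Polynomial.le_natDegree_of_ne_zero ?_)
    rw [coeff_dehomogenize_pderiv_one, ← hd]
    exact mul_ne_zero (Nat.cast_ne_zero.2 (by omega)) (Polynomial.leadingCoeff_ne_zero.2 hf0)

end BinaryForm

end MvPolynomial

theorem filter_add_eq_image_Ico (n k : ℕ) :
    ((range n ×ˢ range n).filter fun p : ℕ × ℕ => p.1 + p.2 = n + k - 1) =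
      (Ico k n).image fun m => (n + k - 1 - m, m) := by
  ext ⟨l, m⟩
  simp only [mem_filter, mem_product, mem_range, mem_image, mem_Ico, Prod.ext_iff]
  constructor
  · rintro ⟨⟨hl, hm⟩, hlm⟩
    exact ⟨m, ⟨by omega, hm⟩, by omega, rfl⟩
  · rintro ⟨m, ⟨hkm, hmn⟩, rfl, rfl⟩
    omega

/-- Remark 4 of the paper: for `H(x,y) = ∑_{s=0}^{n+1} h_s x^{n+1−s} y^s` generic and
`1 ≤ k ≤ n−1`, the `2k×2k` matrix `E_{n,k}` of formula (6) is degenerate iff some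
non-trivial linear combination `∑ c_{l,m} x^l y^m` over pairs `(l,m)` with
`0 ≤ l,m ≤ n−1`, `l+m = n+k−1`, belongs to the gradient ideal of `H`. -/
theorem det_E_eq_zero_iff (n k : ℕ) (hn : 2 ≤ n) (hk1 : 1 ≤ k) (hk2 : k ≤ n - 1)
    (h : ℕ → ℂ)
    (H : MvPolynomial (Fin 2) ℂ)
    (hHdef : H = ∑ s ∈ Finset.range (n + 2),
      C (h s) * X (0 : Fin 2) ^ (n + 1 - s) * X (1 : Fin 2) ^ s)
    (hgen : ∀ L : MvPolynomial (Fin 2) ℂ, L.IsHomogeneous 1 → L ≠ 0 → ¬ (L ^ 2 ∣ H))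
    (A B C' D : Matrix (Fin k) (Fin k) ℂ)
    (hA : ∀ i j : Fin k, A i j =
      if (i : ℕ) ≤ (j : ℕ) then ((n + 1 - ((j : ℕ) - (i : ℕ)) : ℕ) : ℂ) * h ((j : ℕ) - (i : ℕ))
      else 0)
    (hB : ∀ i j : Fin k, B i j =
      if (j : ℕ) ≤ (i : ℕ) then (((i : ℕ) - (j : ℕ) + 1 : ℕ) : ℂ) * h (n - ((i : ℕ) - (j : ℕ)))
      else 0)
    (hC : ∀ i j : Fin k, C' i j =
      if (i : ℕ) ≤ (j : ℕ) then (((j : ℕ) - (i : ℕ) + 1 : ℕ) : ℂ) * h ((j : ℕ) - (i : ℕ) + 1)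
      else 0)
    (hD : ∀ i j : Fin k, D i j =
      if (j : ℕ) ≤ (i : ℕ) then ((n + 1 - ((i : ℕ) - (j : ℕ)) : ℕ) : ℂ) *
        h (n + 1 - ((i : ℕ) - (j : ℕ)))
      else 0) :
    (Matrix.fromBlocks A B C' D).det = 0 ↔
      ∃ c : ℕ × ℕ → ℂ,
        (∃ p ∈ ((Finset.range n) ×ˢ (Finset.range n)).filter
            (fun p : ℕ × ℕ => p.1 + p.2 = n + k - 1), c p ≠ 0) ∧
        (∑ p ∈ ((Finset.range n) ×ˢ (Finset.range n)).filter
            (fun p : ℕ × ℕ => p.1 + p.2 = n + k - 1),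
          C (c p) * X (0 : Fin 2) ^ p.1 * X (1 : Fin 2) ^ p.2) ∈
          Ideal.span {pderiv (0 : Fin 2) H, pderiv (1 : Fin 2) H} := by
  have hH : H.IsHomogeneous (n + 1) := by
    rw [hHdef]
    exact isHomogeneous_sum_C_mul_X_pow_mul_X_pow _ _ fun s hs => by simp at hs; omega
  have hf : ∀ t, (dehomogenize H).coeff t = if t ≤ n + 1 then h t else 0 := fun t => by
    simp [hHdef, Nat.lt_succ_iff]
  have hd₀ : (pderiv 0 H).IsHomogeneous n := hH.pderiv
  have hd₁ : (pderiv 1 H).IsHomogeneous n := hH.pderiv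
  -- Entries that must vanish do so by the truncated subtraction in `n + 1 - t`, or because
  -- `H(1, y)` has no coefficients beyond `y ^ (n + 1)`.
  have hE : fromBlocks A B C' D = fromBlocks
      (Polynomial.shiftedCoeffMatrix (dehomogenize (pderiv 0 H)) k 0)
      (Polynomial.shiftedCoeffMatrix (dehomogenize (pderiv 0 H)) k n)
      (Polynomial.shiftedCoeffMatrix (dehomogenize (pderiv 1 H)) k 0)
      (Polynomial.shiftedCoeffMatrix (dehomogenize (pderiv 1 H)) k n) := by
    congr 1 <;> ext i j <;> simp only [Polynomial.shiftedCoeffMatrix, of_apply,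
      Polynomial.coeff_X_pow_mul', hH.coeff_dehomogenize_pderiv_zero,
      coeff_dehomogenize_pderiv_one, hf, hA, hB, hC, hD] <;> split_ifs <;>
      first
      | omega
      | (congr 2 <;> omega)
      | (rw [zero_eq_mul, Nat.cast_eq_zero]; left; omega)
      | simp
  have hinj : Set.InjOn (fun m => (n + k - 1 - m, m)) (Ico k n) := fun _ _ _ _ h =>
    (Prod.ext_iff.1 h).2
  rw [hE, Polynomial.det_fromBlocks_shiftedCoeffMatrix_eq_zero_iff hk1
      hd₀.natDegree_dehomogenize_le hd₁.natDegree_dehomogenize_le,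
    Polynomial.exists_mul_add_mul_supported_iff (hH.isCoprime_dehomogenize_pderiv (by omega) hgen)
      (hH.le_natDegree_dehomogenize_pderiv (by omega) hgen) (by omega),
    filter_add_eq_image_Ico]
  simp only [exists_mem_image, sum_image hinj]
  exact ⟨fun ⟨c, hc, hPQ⟩ => ⟨fun p => c p.2, hc, (sum_Ico_mem_span_pair_iff hk1 hd₀ hd₁ _).2 hPQ⟩,
    fun ⟨c, hc, hT⟩ => ⟨_, hc, (sum_Ico_mem_span_pair_iff hk1 hd₀ hd₁ _).1 hT⟩⟩
end

section
/- Let n ≥ 1 be an integer. Then ∏_{l=0}^{n−1} Γ((l+1)/(n+1) + 1) = (2π)^{n/2} · (n+1)^{1/2 − (n+2)} · (n+1)!, where Γ denotes the real Gamma function. -/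
/-!
Peeling off `Γ(x + 1) = x Γ(x)` leaves `n! / (n + 1)^n` times `P = ∏_{k=1}^{n} Γ(k/(n+1))`.
Pairing `k` with `n + 1 - k` and using Euler's reflection formula gives
`P² = π^n / ∏_{k=1}^{n} sin(πk/(n+1))`, and the sine product is `(n + 1) / 2^n` because
`|1 - ζ^k| = 2 sin(πk/(n+1))` and `∏_{k=1}^{n} (1 - ζ^k) = n + 1` for a primitive
`(n + 1)`-th root of unity `ζ`.
-/

open Finset Real

lemma one_sub_exp_two_mul_I (z : ℂ) :
    1 - Complex.exp (2 * z * Complex.I) =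
      -2 * Complex.I * Complex.sin z * Complex.exp (z * Complex.I) := by
  have hsq : Complex.exp (2 * z * Complex.I) = Complex.exp (z * Complex.I) ^ 2 := by
    rw [← Complex.exp_nat_mul]; ring_nf
  have hinv : Complex.exp (-z * Complex.I) * Complex.exp (z * Complex.I) = 1 := by
    rw [← Complex.exp_add]; ring_nf; exact Complex.exp_zero
  rw [Complex.sin, hsq]
  linear_combination Complex.I ^ 2 * hinv + (1 - Complex.exp (z * Complex.I) ^ 2) * Complex.I_sq

lemma norm_one_sub_exp_two_mul_I (θ : ℝ) :
    ‖1 - Complex.exp (2 * θ * Complex.I)‖ = 2 * |sin θ| := by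
  rw [one_sub_exp_two_mul_I, norm_mul, norm_mul, norm_mul, Complex.norm_exp_ofReal_mul_I,
    ← Complex.ofReal_sin, Complex.norm_real]
  simp

lemma sin_pi_mul_succ_div_succ_pos {n k : ℕ} (hk : k < n) :
    0 < sin (π * ((k + 1) / (n + 1))) := by
  refine sin_pos_of_pos_of_lt_pi (by positivity) (mul_lt_of_lt_one_right pi_pos ?_)
  rw [div_lt_one (by positivity)]
  exact_mod_cast Nat.succ_lt_succ hk

lemma prod_sin_pi_mul_succ_div_succ (n : ℕ) :
    ∏ k ∈ range n, sin (π * ((k + 1) / (n + 1))) = (n + 1) / 2 ^ n := by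
  have hμ := Complex.isPrimitiveRoot_exp (n + 1) n.succ_ne_zero
  have hnorm := congrArg norm hμ.prod_one_sub_pow_eq_order
  have hterm : ∀ k ∈ range n, ‖1 - Complex.exp (2 * π * Complex.I / (n + 1 : ℕ)) ^ (k + 1)‖ =
      2 * sin (π * ((k + 1) / (n + 1))) := by
    intro k hk
    rw [← Complex.exp_nat_mul, ← abs_of_pos (sin_pi_mul_succ_div_succ_pos (mem_range.mp hk)),
      ← norm_one_sub_exp_two_mul_I]
    push_cast
    ring_nf
  rw [norm_prod, prod_congr rfl hterm, prod_mul_distrib, prod_const, card_range] at hnorm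
  rw [eq_div_iff (by positivity), mul_comm, hnorm]
  exact_mod_cast Complex.norm_natCast (n + 1)

lemma prod_range_one_sub_succ_div_succ {M : Type*} [CommMonoid M] (f : ℝ → M) (n : ℕ) :
    ∏ k ∈ range n, f (1 - (k + 1) / (n + 1)) = ∏ k ∈ range n, f ((k + 1) / (n + 1)) := by
  rw [← prod_range_reflect]
  refine prod_congr rfl fun k hk => congrArg f ?_
  have hkn : k + 1 ≤ n := mem_range.mp hk
  rw [Nat.sub_sub, Nat.add_comm 1 k, Nat.cast_sub hkn]
  field_simp
  push_cast
  ring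

lemma prod_Gamma_succ_div_succ_mul_self (n : ℕ) :
    (∏ k ∈ range n, Gamma ((k + 1) / (n + 1))) * ∏ k ∈ range n, Gamma ((k + 1) / (n + 1)) =
      (2 * π) ^ n / (n + 1) := by
  calc _ = ∏ k ∈ range n, Gamma ((k + 1) / (n + 1)) * Gamma (1 - (k + 1) / (n + 1)) := by
        rw [prod_mul_distrib, prod_range_one_sub_succ_div_succ Gamma]
    _ = ∏ k ∈ range n, π / sin (π * ((k + 1) / (n + 1))) :=
        prod_congr rfl fun k _ => Gamma_mul_Gamma_one_sub _
    _ = (2 * π) ^ n / (n + 1) := by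
        rw [prod_div_distrib, prod_const, card_range, prod_sin_pi_mul_succ_div_succ]
        field_simp
        ring

lemma prod_Gamma_succ_div_succ (n : ℕ) :
    ∏ k ∈ range n, Gamma ((k + 1) / (n + 1)) = (2 * π) ^ (n / 2 : ℝ) * (n + 1) ^ (-1 / 2 : ℝ) := by
  have hP : 0 < ∏ k ∈ range n, Gamma ((k + 1) / (n + 1)) :=
    prod_pos fun k _ => Gamma_pos_of_pos (by positivity)
  rw [← sqrt_mul_self hP.le, prod_Gamma_succ_div_succ_mul_self, sqrt_eq_rpow,
    div_rpow (by positivity) (by positivity), ← rpow_natCast, ← rpow_mul (by positivity),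
    div_eq_mul_inv, ← rpow_neg (by positivity)]
  ring_nf

lemma prod_succ_div_succ (n : ℕ) :
    ∏ k ∈ range n, ((k + 1) / (n + 1) : ℝ) = n.factorial / (n + 1) ^ n := by
  rw [prod_div_distrib, prod_const, card_range, ← prod_range_add_one_eq_factorial]
  push_cast
  rfl

theorem prod_gamma_shift_eq_general (n : ℕ) :
    ∏ l ∈ Finset.range n, Real.Gamma (((l : ℝ) + 1) / ((n : ℝ) + 1) + 1) =
      (2 * Real.pi) ^ ((n : ℝ) / 2) * ((n : ℝ) + 1) ^ ((1 : ℝ) / 2 - ((n : ℝ) + 2)) *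
        ((n + 1).factorial : ℝ) := by
  have hpos : (0 : ℝ) < n + 1 := by positivity
  calc _ = (∏ k ∈ range n, ((k + 1) / (n + 1) : ℝ)) *
        ∏ k ∈ range n, Gamma ((k + 1) / (n + 1)) := by
        rw [← prod_mul_distrib]
        exact prod_congr rfl fun k _ => Gamma_add_one (by positivity)
    _ = n.factorial / (n + 1) ^ n * ((2 * π) ^ (n / 2 : ℝ) * (n + 1) ^ (-1 / 2 : ℝ)) := by
        rw [prod_succ_div_succ, prod_Gamma_succ_div_succ]
    _ = _ := by
        rw [show (1 / 2 - (n + 2) : ℝ) = -1 / 2 - (n + 1 : ℕ) by push_cast; ring,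
          rpow_sub hpos, rpow_natCast, Nat.factorial_succ]
        push_cast
        field_simp
        ring

/-- Formula (38) of the paper:
`∏_{l=0}^{n−1} Γ((l+1)/(n+1) + 1) = (2π)^{n/2}·(n+1)^{1/2 − (n+2)}·(n+1)!`. -/
theorem prod_gamma_shift_eq (n : ℕ) (hn : 1 ≤ n) :
    ∏ l ∈ Finset.range n, Real.Gamma (((l : ℝ) + 1) / ((n : ℝ) + 1) + 1) =
      (2 * Real.pi) ^ ((n : ℝ) / 2) * ((n : ℝ) + 1) ^ ((1 : ℝ) / 2 - ((n : ℝ) + 2)) *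
        ((n + 1).factorial : ℝ) :=
  prod_gamma_shift_eq_general n
end

section
/- Let n ≥ 1 be an integer. Then ∏_{l=0}^{n−1} ∏_{m=0}^{n−1} Γ((l+m+2)/(n+1) + 1) = (2π)^{(n²−n)/2} · (n+1)^{−3(n²−1)/2} · ∏_{m=1}^{n−1} (m+n+1)!, where Γ denotes the real Gamma function. -/
/-!
Write `N = n + 1`. For a primitive `N`-th root of unity `ζ`, `∏_{k=1}^{n} (1 - ζ^k) = N`;
taking norms gives `∏_{k=1}^{n} sin (π k / N) = N / 2^n`, and then the reflection formula
gives `∏_{k=1}^{n} Γ(k / N) = (2π)^{n/2} N^{-1/2}`. The windows `∏_{k<N} Γ((j + k + 1) / N)` at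
`j` and `j + 1` differ by the factor `(j + 1) / N` (from `Γ(x + 1) = x Γ(x)`), so the window at
`j` equals `(2π)^{n/2} N^{-1/2-j} j!`.
Row `l` of the double product, completed by the factor `Γ((l + 1) / N + 1)`, is the window at
`j = l + n + 1`, while the completing factors together form the window at `j = n + 1`, which is
also the completed row `l = 0`. Hence the double product is the product of the windows at
`j = m + n + 1`, `1 ≤ m ≤ n - 1`.
-/

open Finset Real
open scoped Nat

@[to_additive]
theorem Finset.prod_range_eq_mul_prod_Icc {M : Type*} [CommMonoid M] (f : ℕ → M) {n : ℕ}
    (hn : n ≠ 0) : ∏ i ∈ range n, f i = f 0 * ∏ i ∈ Icc 1 (n - 1), f i := by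
  rw [range_eq_Ico, prod_eq_prod_Ico_succ_bot (Nat.pos_of_ne_zero hn),
    Icc_sub_one_right_eq_Ico_of_not_isMin (by simpa using hn)]

namespace Real

theorem prod_sin_pi_mul_div (n : ℕ) :
    ∏ k ∈ range n, sin (π * (k + 1) / (n + 1)) = (n + 1) / 2 ^ n := by
  have hζ : IsPrimitiveRoot (Complex.exp (2 * π * Complex.I / (n + 1 : ℕ))) (n + 1) :=
    Complex.isPrimitiveRoot_exp (n + 1) n.succ_ne_zero
  have hnorm : ∀ k ∈ range n,
      ‖1 - Complex.exp (2 * π * Complex.I / (n + 1 : ℕ)) ^ (k + 1)‖ =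
        2 * sin (π * (k + 1) / (n + 1)) := by
    intro k hk
    set θ := π * (k + 1) / (n + 1)
    have hθ : θ < π := by
      rw [div_lt_iff₀ (by positivity)]
      exact mul_lt_mul_of_pos_left (by simpa using mem_range.1 hk) pi_pos
    rw [← Complex.exp_nat_mul, norm_sub_rev,
      show (↑(k + 1) * (2 * π * Complex.I / (n + 1 : ℕ)) : ℂ) = Complex.I * ↑(2 * θ) by
        push_cast [θ]; ring,
      Complex.norm_exp_I_mul_ofReal_sub_one, mul_div_cancel_left₀ θ two_ne_zero, norm_eq_abs,
      abs_of_pos (mul_pos two_pos (sin_pos_of_pos_of_lt_pi (by positivity) hθ))]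
  have h := congrArg (‖·‖) hζ.prod_one_sub_pow_eq_order
  simp only [norm_prod] at h
  rw [prod_congr rfl hnorm, prod_mul_distrib, prod_const, card_range] at h
  rw [eq_div_iff (by positivity), mul_comm]
  exact_mod_cast h

theorem prod_Gamma_div (n : ℕ) :
    ∏ k ∈ range n, Gamma ((k + 1) / (n + 1)) =
      (2 * π) ^ ((n : ℝ) / 2) * ((n : ℝ) + 1) ^ (-(1 / 2 : ℝ)) := by
  have hpos : 0 < ∏ k ∈ range n, Gamma ((k + 1) / (n + 1)) :=
    prod_pos fun k _ ↦ Gamma_pos_of_pos (by positivity)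
  refine (pow_left_inj₀ hpos.le (by positivity) two_ne_zero).1 ?_
  have hreflect : ∏ k ∈ range n, Gamma ((k + 1) / (n + 1)) =
      ∏ k ∈ range n, Gamma (1 - (k + 1) / (n + 1)) := by
    rw [← prod_range_reflect]
    refine prod_congr rfl fun k hk ↦ congrArg Gamma ?_
    rw [Nat.sub_sub, Nat.cast_sub (by rw [add_comm]; exact mem_range.1 hk)]
    push_cast
    field_simp
    ring
  calc (∏ k ∈ range n, Gamma ((k + 1) / (n + 1))) ^ 2
      = ∏ k ∈ range n, (Gamma ((k + 1) / (n + 1)) * Gamma (1 - (k + 1) / (n + 1))) := by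
        rw [sq, prod_mul_distrib, ← hreflect]
    _ = π ^ n / ∏ k ∈ range n, sin (π * (k + 1) / (n + 1)) := by
        simp only [Gamma_mul_Gamma_one_sub, prod_div_distrib, prod_const, card_range, mul_div_assoc]
    _ = ((2 * π) ^ ((n : ℝ) / 2) * ((n : ℝ) + 1) ^ (-(1 / 2 : ℝ))) ^ 2 := by
        rw [prod_sin_pi_mul_div, mul_pow, ← rpow_mul_natCast (by positivity),
          ← rpow_mul_natCast (by positivity)]
        norm_num [rpow_natCast, rpow_neg_one]
        field_simp
        ring

theorem prod_Gamma_add_succ_div (n : ℕ) {x : ℝ} (hx : 0 < x) :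
    ∏ k ∈ range (n + 1), Gamma (x + (k + 1) / (n + 1)) =
      x * ∏ k ∈ range (n + 1), Gamma (x + k / (n + 1)) := by
  refine mul_left_cancel₀ (Gamma_pos_of_pos hx).ne' ?_
  calc Gamma x * ∏ k ∈ range (n + 1), Gamma (x + (k + 1) / (n + 1))
      = ∏ k ∈ range (n + 2), Gamma (x + k / (n + 1)) := by
        rw [prod_range_succ' _ (n + 1)]
        push_cast
        simp [mul_comm]
    _ = (∏ k ∈ range (n + 1), Gamma (x + k / (n + 1))) * Gamma (x + 1) := by
        rw [prod_range_succ]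
        push_cast
        rw [div_self (by positivity)]
    _ = Gamma x * (x * ∏ k ∈ range (n + 1), Gamma (x + k / (n + 1))) := by
        rw [Gamma_add_one hx.ne']
        ring

theorem prod_Gamma_natCast_add_div (n j : ℕ) :
    ∏ k ∈ range (n + 1), Gamma ((j + k + 1) / (n + 1)) =
      (2 * π) ^ ((n : ℝ) / 2) * ((n : ℝ) + 1) ^ (-(1 / 2 : ℝ) - j) * j ! := by
  induction j with
  | zero =>
    rw [prod_range_succ]
    simp only [Nat.cast_zero, zero_add, sub_zero, Nat.factorial_zero, Nat.cast_one, mul_one]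
    rw [div_self (by positivity), Gamma_one, mul_one, prod_Gamma_div]
  | succ j ih =>
    have hx : (0 : ℝ) < (j + 1) / (n + 1) := by positivity
    calc ∏ k ∈ range (n + 1), Gamma (((j + 1 : ℕ) + k + 1) / (n + 1))
        = ∏ k ∈ range (n + 1), Gamma ((j + 1) / (n + 1) + (k + 1) / (n + 1)) := by
          refine prod_congr rfl fun k _ ↦ congrArg Gamma ?_
          push_cast
          ring
      _ = (j + 1) / (n + 1) * ∏ k ∈ range (n + 1), Gamma ((j + k + 1) / (n + 1)) := by
          rw [prod_Gamma_add_succ_div n hx]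
          congr 1
          refine prod_congr rfl fun k _ ↦ congrArg Gamma ?_
          ring
      _ = (2 * π) ^ ((n : ℝ) / 2) * ((n : ℝ) + 1) ^ (-(1 / 2 : ℝ) - (j + 1 : ℕ)) *
            (j + 1) ! := by
          rw [ih, Nat.factorial_succ, Nat.cast_succ, sub_add_eq_sub_sub,
            rpow_sub_one (by positivity)]
          push_cast
          field_simp

theorem prod_Gamma_add_two_div_add_one_mul (n l : ℕ) :
    (∏ m ∈ range n, Gamma ((l + m + 2) / (n + 1) + 1)) * Gamma ((l + 1) / (n + 1) + 1) =
      (2 * π) ^ ((n : ℝ) / 2) * ((n : ℝ) + 1) ^ (-(1 / 2 : ℝ) - (l + n + 1 : ℕ)) *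
        (l + n + 1) ! := by
  rw [← prod_Gamma_natCast_add_div, prod_range_succ']
  push_cast
  congr 1
  · refine prod_congr rfl fun m _ ↦ congrArg Gamma ?_
    field_simp
    ring
  · congr 1
    field_simp
    ring

theorem prod_Gamma_succ_div_add_one (n : ℕ) :
    ∏ l ∈ range n, Gamma ((l + 1) / (n + 1) + 1) =
      (2 * π) ^ ((n : ℝ) / 2) * ((n : ℝ) + 1) ^ (-(1 / 2 : ℝ) - (n + 1 : ℕ)) *
        (n + 1) ! := by
  rw [← prod_Gamma_natCast_add_div, prod_range_succ,
    show ((n + 1 : ℕ) + n + 1) / ((n : ℝ) + 1) = 2 by push_cast; field_simp; ring,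
    Gamma_two, mul_one]
  refine prod_congr rfl fun l _ ↦ congrArg Gamma ?_
  push_cast
  field_simp
  ring

end Real

theorem prod_Icc_rpow_mul_rpow {a b : ℝ} (ha : 0 < a) (hb : 0 < b) {n : ℕ} (hn : n ≠ 0) :
    ∏ m ∈ Icc 1 (n - 1), (a ^ ((n : ℝ) / 2) * b ^ (-(1 / 2 : ℝ) - (m + n + 1 : ℕ))) =
      a ^ (((n : ℝ) ^ 2 - n) / 2) * b ^ (-(3 * ((n : ℝ) ^ 2 - 1) / 2)) := by
  have hsum : ∑ m ∈ Icc 1 (n - 1), (m : ℝ) = n * (n - 1) / 2 := by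
    have h := congrArg (Nat.cast : ℕ → ℝ) (sum_range_id_mul_two n)
    rw [sum_range_eq_add_sum_Icc _ hn] at h
    push_cast [Nat.cast_sub (Nat.one_le_iff_ne_zero.2 hn)] at h
    linarith
  have hcard : ((Icc 1 (n - 1)).card : ℝ) = n - 1 := by
    rw [Nat.card_Icc, Nat.add_sub_cancel, Nat.cast_sub (Nat.one_le_iff_ne_zero.2 hn), Nat.cast_one]
  rw [prod_mul_distrib, ← rpow_sum_of_pos ha, ← rpow_sum_of_pos hb]
  congr 2
  · rw [sum_const, nsmul_eq_mul, hcard]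
    ring
  · push_cast
    rw [sum_sub_distrib, sum_const, nsmul_eq_mul, sum_add_distrib, sum_add_distrib, hsum,
      sum_const, sum_const, nsmul_eq_mul, nsmul_eq_mul, hcard]
    ring

open Finset in
/-- Formula (39) of the paper:
`∏_{l=0}^{n−1} ∏_{m=0}^{n−1} Γ((l+m+2)/(n+1) + 1)
  = (2π)^{(n²−n)/2}·(n+1)^{−3(n²−1)/2}·∏_{m=1}^{n−1}(m+n+1)!`. -/
theorem double_prod_gamma_eq (n : ℕ) (hn : 1 ≤ n) :
    ∏ l ∈ Finset.range n, ∏ m ∈ Finset.range n,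
        Real.Gamma (((l : ℝ) + (m : ℝ) + 2) / ((n : ℝ) + 1) + 1) =
      (2 * Real.pi) ^ (((n : ℝ) ^ 2 - (n : ℝ)) / 2) *
        ((n : ℝ) + 1) ^ (-(3 * ((n : ℝ) ^ 2 - 1) / 2)) *
        ∏ m ∈ Finset.Icc 1 (n - 1), ((m + n + 1).factorial : ℝ) := by
  have hn0 : n ≠ 0 := Nat.one_le_iff_ne_zero.1 hn
  set W : ℕ → ℝ := fun j ↦
    (2 * π) ^ ((n : ℝ) / 2) * ((n : ℝ) + 1) ^ (-(1 / 2 : ℝ) - j) * (j ! : ℝ)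
  have hW : W (n + 1) ≠ 0 := by positivity
  have hcorner : ∏ l ∈ range n, Gamma ((l + 1) / (n + 1) + 1) = W (n + 1) :=
    prod_Gamma_succ_div_add_one n
  refine mul_left_cancel₀ hW ?_
  calc W (n + 1) * ∏ l ∈ range n, ∏ m ∈ range n, Gamma ((l + m + 2) / (n + 1) + 1)
      = ∏ l ∈ range n, W (l + n + 1) := by
        rw [← hcorner, mul_comm, ← prod_mul_distrib]
        exact prod_congr rfl fun l _ ↦ prod_Gamma_add_two_div_add_one_mul n l
    _ = W (n + 1) * ∏ m ∈ Icc 1 (n - 1), W (m + n + 1) := by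
        rw [prod_range_eq_mul_prod_Icc _ hn0, zero_add]
    _ = W (n + 1) * ((2 * π) ^ (((n : ℝ) ^ 2 - n) / 2) *
          ((n : ℝ) + 1) ^ (-(3 * ((n : ℝ) ^ 2 - 1) / 2)) *
            ∏ m ∈ Icc 1 (n - 1), ((m + n + 1)! : ℝ)) := by
        simp only [W]
        rw [prod_mul_distrib, prod_Icc_rpow_mul_rpow (by positivity) (by positivity) hn0]
end

section
/- Let n ≥ 1 be an integer. Then ∏_{l=0}^{n−1} ∏_{m=0}^{n−1} ∫_0^1 x^l (1 − x^{n+1})^{(m+1)/(n+1)} dx = (n+1)^{−n²} · ( ∏_{l=0}^{n−1} Γ((l+1)/(n+1)) )^n · ( ∏_{l=0}^{n−1} Γ((l+1)/(n+1) + 1) )^n / ∏_{l=0}^{n−1} ∏_{m=0}^{n−1} Γ((l+m+2)/(n+1) + 1), where Γ denotes the real Gamma function. -/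
/-!
Substituting `y = x ^ (n + 1)` turns each factor into a Beta integral
`(n + 1)⁻¹ B((l + 1)/(n + 1), (m + 1)/(n + 1) + 1)`, and `B(a, b) = Γ(a) Γ(b) / Γ(a + b)`.
Multiplying the `n²` factors out collects the constants, the numerators depending only on `l`
and those depending only on `m`.
-/

open MeasureTheory Set Real

theorem integral_rpow_mul_one_sub_rpow {a b : ℝ} (ha : 0 < a) (hb : 0 < b) :
    ∫ x in (0 : ℝ)..1, x ^ (a - 1) * (1 - x) ^ (b - 1) = Gamma a * Gamma b / Gamma (a + b) := by
  have hβ : Complex.betaIntegral a b =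
      ↑(∫ x in (0 : ℝ)..1, x ^ (a - 1) * (1 - x) ^ (b - 1)) := by
    rw [Complex.betaIntegral, ← intervalIntegral.integral_ofReal]
    refine intervalIntegral.integral_congr fun x hx => ?_
    rw [uIcc_of_le zero_le_one] at hx
    simp only [Complex.ofReal_mul, Complex.ofReal_cpow hx.1,
      Complex.ofReal_cpow (sub_nonneg.2 hx.2)]
    push_cast
    rfl
  have h := Complex.betaIntegral_eq_Gamma_mul_div a b (by simpa) (by simpa)
  rw [hβ, ← Complex.ofReal_add, Complex.Gamma_ofReal, Complex.Gamma_ofReal,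
    Complex.Gamma_ofReal] at h
  exact_mod_cast h

theorem image_rpow_Ioo_zero_one {p : ℝ} (hp : 0 < p) : (· ^ p) '' Ioo (0 : ℝ) 1 = Ioo 0 1 := by
  ext y
  constructor
  · rintro ⟨x, hx, rfl⟩
    exact ⟨rpow_pos_of_pos hx.1 p, rpow_lt_one hx.1.le hx.2 hp⟩
  · intro hy
    exact ⟨y ^ p⁻¹, ⟨rpow_pos_of_pos hy.1 _, rpow_lt_one hy.1.le hy.2 (inv_pos.2 hp)⟩,
      rpow_inv_rpow hy.1.le hp.ne'⟩

theorem integral_Ioo_rpow_mul_comp_rpow (f : ℝ → ℝ) {p : ℝ} (hp : 0 < p) (q : ℝ) :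
    ∫ x in Ioo (0 : ℝ) 1, x ^ q * f (x ^ p) =
      p⁻¹ * ∫ y in Ioo (0 : ℝ) 1, y ^ ((q + 1) / p - 1) * f y := by
  have h := integral_image_eq_integral_abs_deriv_smul (measurableSet_Ioo (a := 0) (b := 1))
    (fun x hx => (hasDerivAt_rpow_const (Or.inl hx.1.ne')).hasDerivWithinAt)
    ((rpow_left_injOn hp.ne').mono fun x hx => hx.1.le) fun y => y ^ ((q + 1) / p - 1) * f y
  rw [image_rpow_Ioo_zero_one hp] at h
  rw [h, ← integral_const_mul]
  refine setIntegral_congr_fun measurableSet_Ioo fun x hx => ?_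
  have hpow : x ^ (p - 1) * (x ^ p) ^ ((q + 1) / p - 1) = x ^ q := by
    rw [← rpow_mul hx.1.le, ← rpow_add hx.1]
    congr 1
    field_simp
    ring
  rw [smul_eq_mul, abs_of_pos (by have := hx.1; positivity), ← hpow]
  field_simp

theorem integral_pow_mul_one_sub_pow_rpow {k : ℕ} (hk : k ≠ 0) (l : ℕ) {s : ℝ}
    (hs : -1 < s) :
    ∫ x in (0 : ℝ)..1, x ^ l * (1 - x ^ k) ^ s =
      (k : ℝ)⁻¹ * (Gamma ((l + 1) / k) * Gamma (s + 1) / Gamma ((l + 1) / k + (s + 1))) := by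
  have hk' : (0 : ℝ) < k := by positivity
  rw [← integral_rpow_mul_one_sub_rpow (by positivity) (by linarith), add_sub_cancel_right]
  simp only [intervalIntegral.integral_of_le zero_le_one, integral_Ioc_eq_integral_Ioo]
  simpa only [rpow_natCast] using
    integral_Ioo_rpow_mul_comp_rpow (fun y => (1 - y) ^ s) hk' l

theorem IP_eq_gamma_products_general (n : ℕ) :
    ∏ l ∈ Finset.range n, ∏ m ∈ Finset.range n,
        ∫ x in (0 : ℝ)..1, x ^ l * (1 - x ^ (n + 1)) ^ (((m : ℝ) + 1) / ((n : ℝ) + 1)) =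
      ((n : ℝ) + 1) ^ (-((n : ℝ) ^ 2)) *
        (∏ l ∈ Finset.range n, Real.Gamma (((l : ℝ) + 1) / ((n : ℝ) + 1))) ^ n *
        (∏ l ∈ Finset.range n, Real.Gamma (((l : ℝ) + 1) / ((n : ℝ) + 1) + 1)) ^ n /
        ∏ l ∈ Finset.range n, ∏ m ∈ Finset.range n,
          Real.Gamma (((l : ℝ) + (m : ℝ) + 2) / ((n : ℝ) + 1) + 1) := by
  have hfactor (l m : ℕ) :
      ∫ x in (0 : ℝ)..1, x ^ l * (1 - x ^ (n + 1)) ^ (((m : ℝ) + 1) / ((n : ℝ) + 1)) =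
        ((n : ℝ) + 1)⁻¹ * Gamma ((l + 1) / (n + 1)) * Gamma ((m + 1) / (n + 1) + 1) /
          Gamma ((l + m + 2) / (n + 1) + 1) := by
    have hs : -1 < ((m : ℝ) + 1) / ((n : ℝ) + 1) := by
      have : 0 ≤ ((m : ℝ) + 1) / ((n : ℝ) + 1) := by positivity
      linarith
    rw [integral_pow_mul_one_sub_pow_rpow n.succ_ne_zero l hs]
    push_cast
    rw [show ((l : ℝ) + 1) / (n + 1) + ((m + 1) / (n + 1) + 1) = (l + m + 2) / (n + 1) + 1 by
      field_simp; ring]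
    ring
  have hconst : ((n : ℝ) + 1) ^ (-((n : ℝ) ^ 2)) = (((n : ℝ) + 1)⁻¹) ^ (n * n) := by
    rw [rpow_neg (by positivity), sq, ← Nat.cast_mul, rpow_natCast, inv_pow]
  simp only [hfactor, hconst, Finset.prod_div_distrib, Finset.prod_mul_distrib,
    Finset.prod_const, Finset.card_range, Finset.prod_pow]
  ring

/-- Formula (35) of the paper: the product `IP = ∏_{l,m=0}^{n−1} I_{(l,m)}` of the
integrals (15) equals
`(n+1)^{−n²}·(∏_{l=0}^{n−1} Γ((l+1)/(n+1)))^n·(∏_{l=0}^{n−1} Γ((l+1)/(n+1)+1))^n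
  / ∏_{l,m=0}^{n−1} Γ((l+m+2)/(n+1)+1)`. -/
theorem IP_eq_gamma_products (n : ℕ) (hn : 1 ≤ n) :
    ∏ l ∈ Finset.range n, ∏ m ∈ Finset.range n,
        ∫ x in (0 : ℝ)..1, x ^ l * (1 - x ^ (n + 1)) ^ (((m : ℝ) + 1) / ((n : ℝ) + 1)) =
      ((n : ℝ) + 1) ^ (-((n : ℝ) ^ 2)) *
        (∏ l ∈ Finset.range n, Real.Gamma (((l : ℝ) + 1) / ((n : ℝ) + 1))) ^ n *
        (∏ l ∈ Finset.range n, Real.Gamma (((l : ℝ) + 1) / ((n : ℝ) + 1) + 1)) ^ n /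
        ∏ l ∈ Finset.range n, ∏ m ∈ Finset.range n,
          Real.Gamma (((l : ℝ) + (m : ℝ) + 2) / ((n : ℝ) + 1) + 1) :=
  IP_eq_gamma_products_general n
end
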